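/- Let (X, d, ≪, ≤, τ) be a strongly causal Lorentzian length space, let (Y, d̃, ≪̃, ≤̃, τ̃) be an arbitrary Lorentzian length space, and let f : X → Y be a surjective distance homothetic map (not necessarily continuous). Then f is an open map (images of d-open sets are d̃-open) and f is injective. -/

import Mathlib

open scoped NNReal ENNReal
open Set Filter Topology

/-- A Lorentzian pre-length space: a causal space `(X, ≪, ≤)` carried by a metric space `X`,
together with a time separation function `τ : X × X → [0, ∞]`. -/
structure LorentzianPreLengthSpace (X : Type*) [MetricSpace X] where
  /-- The chronological relation `≪`. -/
  chron : X → X → Prop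
  /-- The causal relation `≤`. -/
  causal : X → X → Prop
  chron_trans : ∀ {x y z : X}, chron x y → chron y z → chron x z
  causal_refl : ∀ x : X, causal x x
  causal_trans : ∀ {x y z : X}, causal x y → causal y z → causal x z
  chron_imp_causal : ∀ {x y : X}, chron x y → causal x y
  /-- The time separation function `τ`. -/
  tau : X → X → ℝ≥0∞
  tau_lsc : LowerSemicontinuous fun p : X × X => tau p.1 p.2
  tau_rev_triangle : ∀ {x y z : X}, causal x y → causal y z → tau x y + tau y z ≤ tau x z
  tau_eq_zero : ∀ {x y : X}, ¬ causal x y → tau x y = 0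
  tau_pos_iff : ∀ {x y : X}, 0 < tau x y ↔ chron x y

namespace LorentzianPreLengthSpace

variable {X : Type*} [MetricSpace X] (L : LorentzianPreLengthSpace X)

/-- Chronological future `I⁺(x)`. -/
def Iplus (x : X) : Set X := {y | L.chron x y}

/-- Chronological past `I⁻(x)`. -/
def Iminus (x : X) : Set X := {y | L.chron y x}

/-- Causal future `J⁺(x)`. -/
def Jplus (x : X) : Set X := {y | L.causal x y}

/-- Causal past `J⁻(x)`. -/
def Jminus (x : X) : Set X := {y | L.causal y x}

/-- A future directed causal curve on `[a,b]`: non-constant, Lipschitz, and order preserving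
from the order of `[a,b]` to the causal relation. -/
def IsFutureCausalCurve (γ : ℝ → X) (a b : ℝ) : Prop :=
  a < b ∧ (∃ K : ℝ≥0, LipschitzOnWith K γ (Icc a b)) ∧
    (∃ s ∈ Icc a b, ∃ t ∈ Icc a b, γ s ≠ γ t) ∧
    ∀ ⦃s⦄, s ∈ Icc a b → ∀ ⦃t⦄, t ∈ Icc a b → s < t → L.causal (γ s) (γ t)

/-- A future directed timelike curve on `[a,b]`. -/
def IsFutureTimelikeCurve (γ : ℝ → X) (a b : ℝ) : Prop :=
  a < b ∧ (∃ K : ℝ≥0, LipschitzOnWith K γ (Icc a b)) ∧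
    (∃ s ∈ Icc a b, ∃ t ∈ Icc a b, γ s ≠ γ t) ∧
    ∀ ⦃s⦄, s ∈ Icc a b → ∀ ⦃t⦄, t ∈ Icc a b → s < t → L.chron (γ s) (γ t)

/-- The `τ`-length of a curve: the infimum over all partitions
`a = t₀ < t₁ < ⋯ < t_N = b` (with `N ≥ 1`) of `∑ τ(γ(tᵢ), γ(tᵢ₊₁))`. -/
noncomputable def tauLength (γ : ℝ → X) (a b : ℝ) : ℝ≥0∞ :=
  ⨅ n : ℕ, ⨅ t : {t : Fin (n + 2) → ℝ // StrictMono t ∧ t 0 = a ∧ t (Fin.last (n + 1)) = b},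
    ∑ i : Fin (n + 1), L.tau (γ (t.1 i.castSucc)) (γ (t.1 i.succ))

/-- Causal path connectedness: causally related (distinct) points are joined by a future
directed causal curve, chronologically related points by a future directed timelike curve. -/
def CausallyPathConnected : Prop :=
  (∀ x y : X, L.causal x y → x ≠ y →
      ∃ γ : ℝ → X, ∃ a b : ℝ, L.IsFutureCausalCurve γ a b ∧ γ a = x ∧ γ b = y) ∧
  (∀ x y : X, L.chron x y →
      ∃ γ : ℝ → X, ∃ a b : ℝ, L.IsFutureTimelikeCurve γ a b ∧ γ a = x ∧ γ b = y)

/-- `p ≤_U q`: there is a future directed causal curve from `p` to `q` with image in `U`. -/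
def CausalInside (U : Set X) (p q : X) : Prop :=
  ∃ γ : ℝ → X, ∃ a b : ℝ, L.IsFutureCausalCurve γ a b ∧ γ a = p ∧ γ b = q ∧ γ '' Icc a b ⊆ U

/-- `U` is causally closed: the relation `≤_U` is closed under limits inside `U`. -/
def CausallyClosedNbhd (U : Set X) : Prop :=
  ∀ (p q : X) (pn qn : ℕ → X), (∀ n, L.CausalInside U (pn n) (qn n)) →
    Tendsto pn atTop (𝓝 p) → Tendsto qn atTop (𝓝 q) → p ∈ U → q ∈ U → L.CausalInside U p q

/-- Every point has a causally closed open neighborhood. -/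
def LocallyCausallyClosed : Prop :=
  ∀ x : X, ∃ U : Set X, IsOpen U ∧ x ∈ U ∧ L.CausallyClosedNbhd U

/-- Localizability: every point has a localizing open neighborhood `Ω`. -/
def Localizable : Prop :=
  ∀ x : X, ∃ Ω : Set X, IsOpen Ω ∧ x ∈ Ω ∧
    (∃ C : ℝ≥0, ∀ (γ : ℝ → X) (a b : ℝ), L.IsFutureCausalCurve γ a b →
        γ '' Icc a b ⊆ Ω → eVariationOn γ (Icc a b) ≤ C) ∧
    ∃ ω : X → X → ℝ≥0∞,
      ContinuousOn (fun pq : X × X => ω pq.1 pq.2) (Ω ×ˢ Ω) ∧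
      (∀ p ∈ Ω, ∀ q ∈ Ω, ω p q ≠ ⊤) ∧
      (∀ p ∈ Ω, ∀ q ∈ Ω, ∀ r ∈ Ω, L.causal p q → L.causal q r → ω p q + ω q r ≤ ω p r) ∧
      (∀ p ∈ Ω, ∀ q ∈ Ω, ¬ L.causal p q → ω p q = 0) ∧
      (∀ p ∈ Ω, ∀ q ∈ Ω, (0 < ω p q ↔ L.chron p q)) ∧
      (∀ y ∈ Ω, (L.Iplus y ∩ Ω).Nonempty ∧ (L.Iminus y ∩ Ω).Nonempty) ∧
      (∀ p ∈ Ω, ∀ q ∈ Ω, L.causal p q → p ≠ q →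
        ∃ γ : ℝ → X, ∃ a b : ℝ, L.IsFutureCausalCurve γ a b ∧ γ a = p ∧ γ b = q ∧
          γ '' Icc a b ⊆ Ω ∧ L.tauLength γ a b = ω p q ∧
          ∀ (σ : ℝ → X) (c e : ℝ), L.IsFutureCausalCurve σ c e → σ c = p → σ e = q →
            σ '' Icc c e ⊆ Ω → L.tauLength σ c e ≤ L.tauLength γ a b)

/-- `L` is a Lorentzian length space: causally path connected, locally causally closed,
localizable, and `τ` is the supremum of `τ`-lengths of connecting causal curves
(the supremum of the empty set being `0`). -/
def IsLengthSpace : Prop :=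
  L.CausallyPathConnected ∧ L.LocallyCausallyClosed ∧ L.Localizable ∧
    ∀ x y : X, L.tau x y = sSup {ℓ : ℝ≥0∞ | ∃ γ : ℝ → X, ∃ a b : ℝ,
      L.IsFutureCausalCurve γ a b ∧ γ a = x ∧ γ b = y ∧ ℓ = L.tauLength γ a b}

/-- `K⁺`: the smallest closed and transitive relation containing `J⁺`. -/
def Kplus : Set (X × X) :=
  ⋂₀ {R : Set (X × X) | IsClosed R ∧ (∀ a b c : X, (a, b) ∈ R → (b, c) ∈ R → (a, c) ∈ R) ∧
      {pq : X × X | L.causal pq.1 pq.2} ⊆ R}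

/-- The Alexandrov topology, generated by the chronological diamonds. -/
def AlexandrovTopology : TopologicalSpace X :=
  TopologicalSpace.generateFrom {s : Set X | ∃ x y : X, s = L.Iplus x ∩ L.Iminus y}

/-- Strong causality: the Alexandrov topology coincides with the metric topology. -/
def StronglyCausal : Prop :=
  L.AlexandrovTopology = (inferInstance : TopologicalSpace X)

/-- Non-total imprisonment: causal curves in a compact set have uniformly bounded
`d`-arclength. -/
def NonTotallyImprisoning : Prop :=
  ∀ K : Set X, IsCompact K → ∃ C : ℝ≥0, ∀ (γ : ℝ → X) (a b : ℝ),
    L.IsFutureCausalCurve γ a b → γ '' Icc a b ⊆ K → eVariationOn γ (Icc a b) ≤ C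

/-- Global hyperbolicity. -/
def GloballyHyperbolic : Prop :=
  L.NonTotallyImprisoning ∧ ∀ x y : X, IsCompact (L.Jplus x ∩ L.Jminus y)

/-- Causality: the causal relation is antisymmetric. -/
def Causal : Prop := ∀ x y : X, L.causal x y → L.causal y x → x = y

/-- Causal simplicity. -/
def CausallySimple : Prop :=
  L.Causal ∧ ∀ x : X, IsClosed (L.Jplus x) ∧ IsClosed (L.Jminus x)

/-- Distinguishing. -/
def Distinguishing : Prop :=
  (∀ x y : X, L.Iplus x = L.Iplus y → x = y) ∧ (∀ x y : X, L.Iminus x = L.Iminus y → x = y)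

/-- Reflectivity. -/
def Reflective : Prop :=
  (∀ x y : X, L.Iplus x ⊆ L.Iplus y → L.Iminus y ⊆ L.Iminus x) ∧
  (∀ x y : X, L.Iminus y ⊆ L.Iminus x → L.Iplus x ⊆ L.Iplus y)

/-- Causal continuity. -/
def CausallyContinuous : Prop := L.Distinguishing ∧ L.Reflective

/-- Stable causality: `K⁺` is antisymmetric. -/
def StablyCausal : Prop := ∀ x y : X, (x, y) ∈ L.Kplus → (y, x) ∈ L.Kplus → x = y

end LorentzianPreLengthSpace

/-- A distance homothetic map: `τ̃(f p, f q) = c · τ(p, q)` for some constant `c > 0`. -/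
def DistanceHomothetic {X Y : Type*} [MetricSpace X] [MetricSpace Y]
    (LX : LorentzianPreLengthSpace X) (LY : LorentzianPreLengthSpace Y) (f : X → Y) : Prop :=
  ∃ c : ℝ≥0, 0 < c ∧ ∀ p q : X, LY.tau (f p) (f q) = (c : ℝ≥0∞) * LX.tau p q

/-- A locally causally Lipschitz map. -/
def LocallyCausallyLipschitz {X Y : Type*} [MetricSpace X] [MetricSpace Y]
    (LX : LorentzianPreLengthSpace X) (f : X → Y) : Prop :=
  ∀ x : X, ∃ U : Set X, IsOpen U ∧ x ∈ U ∧ ∃ M : ℝ, 0 < M ∧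
    ∀ x1 ∈ U, ∀ x2 ∈ U, LX.causal x1 x2 → dist (f x1) (f x2) ≤ M * dist x1 x2


/-!
Positivity of `τ` is `≪`, so a distance homothety preserves and reflects `≪`. Hence `f` maps
the chronological diamonds `I⁺(x) ∩ I⁻(y)` of `X` onto those of `Y`, which are open by lower
semicontinuity of `τ̃`; since the diamonds generate the topology of `X`, the inverse of `f` is
continuous. If `f p = f q`, then `p` and `q` lie in the same diamonds, so they have the same
neighbourhoods and coincide because a metric space is T₀.
-/

namespace LorentzianPreLengthSpace

variable {X Y : Type*} [MetricSpace X] [MetricSpace Y] (L : LorentzianPreLengthSpace X)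

theorem isOpen_Iplus (x : X) : IsOpen (L.Iplus x) := by
  have hlsc : LowerSemicontinuous fun y => L.tau x y :=
    L.tau_lsc.comp (Continuous.prodMk_right x)
  convert hlsc.isOpen_preimage 0 using 1
  ext y
  simp [Iplus, ← L.tau_pos_iff]

theorem isOpen_Iminus (x : X) : IsOpen (L.Iminus x) := by
  have hlsc : LowerSemicontinuous fun y => L.tau y x :=
    L.tau_lsc.comp (Continuous.prodMk_left x)
  convert hlsc.isOpen_preimage 0 using 1
  ext y
  simp [Iminus, ← L.tau_pos_iff]

variable {L} {LY : LorentzianPreLengthSpace Y} {f : X → Y}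

theorem image_diamond_of_chron_iff (hsurj : Function.Surjective f)
    (hf : ∀ p q, LY.chron (f p) (f q) ↔ L.chron p q) (x y : X) :
    f '' (L.Iplus x ∩ L.Iminus y) = LY.Iplus (f x) ∩ LY.Iminus (f y) := by
  ext z
  obtain ⟨w, rfl⟩ := hsurj z
  constructor
  · rintro ⟨v, ⟨hxv, hvy⟩, hvw⟩
    exact hvw ▸ ⟨(hf x v).2 hxv, (hf v y).2 hvy⟩
  · rintro ⟨hxw, hwy⟩
    exact ⟨w, ⟨(hf x w).1 hxw, (hf w y).1 hwy⟩, rfl⟩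

namespace StronglyCausal

theorem eq_of_Iplus_eq_of_Iminus_eq (hsc : L.StronglyCausal) {p q : X}
    (hplus : L.Iplus p = L.Iplus q) (hminus : L.Iminus p = L.Iminus q) : p = q := by
  have hnhds : @nhds X L.AlexandrovTopology p = @nhds X L.AlexandrovTopology q := by
    rw [AlexandrovTopology, TopologicalSpace.nhds_generateFrom,
      TopologicalSpace.nhds_generateFrom]
    congr! 3 with s
    refine and_congr_left fun ⟨x, y, hs⟩ => ?_
    subst hs
    exact and_congr (Set.ext_iff.1 hminus x) (Set.ext_iff.1 hplus y)
  rw [hsc] at hnhds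
  exact Inseparable.eq hnhds

theorem continuous_of_isOpen_preimage_diamond (hsc : L.StronglyCausal)
    {Z : Type*} [TopologicalSpace Z] {g : Z → X}
    (hg : ∀ x y, IsOpen (g ⁻¹' (L.Iplus x ∩ L.Iminus y))) : Continuous g := by
  have hcont : @Continuous Z X _ L.AlexandrovTopology g := by
    rw [AlexandrovTopology, continuous_generateFrom_iff]
    rintro _ ⟨x, y, rfl⟩
    exact hg x y
  rwa [hsc] at hcont

theorem injective_of_chron_iff (hsc : L.StronglyCausal)
    (hf : ∀ p q, LY.chron (f p) (f q) ↔ L.chron p q) : Function.Injective f := by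
  intro p q hpq
  refine hsc.eq_of_Iplus_eq_of_Iminus_eq ?_ ?_ <;> ext z
  · exact (hf p z).symm.trans (hpq ▸ hf q z)
  · exact (hf z p).symm.trans (hpq ▸ hf z q)

theorem isOpenMap_of_chron_iff (hsc : L.StronglyCausal) (hsurj : Function.Surjective f)
    (hf : ∀ p q, LY.chron (f p) (f q) ↔ L.chron p q) : IsOpenMap f := by
  let e := Equiv.ofBijective f ⟨hsc.injective_of_chron_iff hf, hsurj⟩
  refine IsOpenMap.of_inverse (f' := e.symm) ?_ e.right_inv e.left_inv
  refine hsc.continuous_of_isOpen_preimage_diamond fun x y => ?_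
  rw [← e.image_eq_preimage_symm]
  change IsOpen (f '' _)
  rw [image_diamond_of_chron_iff hsurj hf]
  exact (LY.isOpen_Iplus _).inter (LY.isOpen_Iminus _)

end StronglyCausal

end LorentzianPreLengthSpace

theorem DistanceHomothetic.chron_iff {X Y : Type*} [MetricSpace X] [MetricSpace Y]
    {LX : LorentzianPreLengthSpace X} {LY : LorentzianPreLengthSpace Y} {f : X → Y}
    (hf : DistanceHomothetic LX LY f) (p q : X) : LY.chron (f p) (f q) ↔ LX.chron p q := by
  obtain ⟨c, hc, htau⟩ := hf
  rw [← LY.tau_pos_iff, ← LX.tau_pos_iff, htau, pos_iff_ne_zero, pos_iff_ne_zero,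
    mul_ne_zero_iff, and_iff_right (by exact_mod_cast hc.ne')]

theorem distanceHomothetic_open_injective_general {X Y : Type*} [MetricSpace X] [MetricSpace Y]
    (LX : LorentzianPreLengthSpace X) (LY : LorentzianPreLengthSpace Y)
    (hXsc : LX.StronglyCausal)
    (f : X → Y) (hsurj : Function.Surjective f) (hhom : DistanceHomothetic LX LY f) :
    IsOpenMap f ∧ Function.Injective f :=
  ⟨hXsc.isOpenMap_of_chron_iff hsurj hhom.chron_iff, hXsc.injective_of_chron_iff hhom.chron_iff⟩

/-- a surjective distance homothetic map from a strongly causal Lorentzian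
length space to a Lorentzian length space is open and injective. -/
theorem distanceHomothetic_open_injective {X Y : Type*} [MetricSpace X] [MetricSpace Y]
    (LX : LorentzianPreLengthSpace X) (LY : LorentzianPreLengthSpace Y)
    (hX : LX.IsLengthSpace) (hY : LY.IsLengthSpace) (hXsc : LX.StronglyCausal)
    (f : X → Y) (hsurj : Function.Surjective f) (hhom : DistanceHomothetic LX LY f) :
    IsOpenMap f ∧ Function.Injective f :=
  distanceHomothetic_open_injective_general LX LY hXsc f hsurj hhom
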